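/- Let k be an integer with 0 ≤ k ≤ m-1, and define a = (γ^(2m+3k+2) + γ^(m+6k+4) + 1)/(3γ^(m+3k+2)), b = (γ^(2m) + γ^(m+6k+4) + γ^(3k+2))/(3γ^(m+3k+2)), c = (γ^(6k+4) + γ^(3k+2) + 1)/(3γ^(3k+2)) in F_q, and let g(x) = a·x^(2m+1) + b·x^(m+1) + c·x. Then for every integer i with 0 ≤ i ≤ m-1 one has g(γ^(3i)) = γ^(3(i+k)+2). -/

import Mathlib

/-!
Since `γ` generates `F_qˣ` and `q - 1 = 3m`, `ω = γ^m` is a primitive cube root of unity, so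
`ω² + ω + 1 = 0` and `3 ≠ 0`. For `y = γ^(3i)` we have `y^m = 1`, hence `g y = (a + b + c) y`,
and with `x = γ^(3k+2)` the identity `3ωx (a + b + c - x) = (x + 1)(ω² + ω + 1)` gives
`a + b + c = x`.
-/

theorem isPrimitiveRoot_pow_of_card_eq_mul_add_one {F : Type*} [Field F] [Finite F]
    {γ : Fˣ} (hγ : ∀ x : Fˣ, x ∈ Subgroup.zpowers γ) {d m : ℕ}
    (hcard : Nat.card F = d * m + 1) :
    IsPrimitiveRoot ((γ : F) ^ m) d := by
  have hγ_prim : IsPrimitiveRoot γ (m * d) := by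
    rw [IsPrimitiveRoot.iff_orderOf, orderOf_eq_card_of_forall_mem_zpowers hγ,
      Nat.card_units, hcard, Nat.add_sub_cancel, mul_comm]
  have hpos : 0 < m * d := by
    rw [← IsPrimitiveRoot.iff_orderOf.mp hγ_prim]
    exact orderOf_pos γ
  simpa using (IsPrimitiveRoot.coe_units_iff.mpr hγ_prim).pow hpos rfl

theorem IsPrimitiveRoot.sq_add_self_add_one {R : Type*} [CommRing R] [IsDomain R] {ω : R}
    (hω : IsPrimitiveRoot ω 3) : ω ^ 2 + ω + 1 = 0 := by
  have := hω.geom_sum_eq_zero (by norm_num)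
  simp only [Finset.sum_range_succ, Finset.sum_range_zero] at this
  linear_combination this

theorem add_mul_pow_add_mul_pow_eq_of_pow_eq_one {R : Type*} [CommRing R] {y : R} {m : ℕ}
    (hy : y ^ m = 1) (a b c : R) :
    a * y ^ (2 * m + 1) + b * y ^ (m + 1) + c * y = (a + b + c) * y := by
  rw [pow_succ, pow_succ, pow_mul', hy]
  ring

theorem coeff_sum_eq_pow {F : Type*} [Field F] {γ : F} (hγ : γ ≠ 0) (h3 : (3 : F) ≠ 0)
    {m : ℕ} (hω : (γ ^ m) ^ 2 + γ ^ m + 1 = 0) (n : ℕ) :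
    (γ ^ (2 * m + n) + γ ^ (m + 2 * n) + 1) / (3 * γ ^ (m + n))
      + (γ ^ (2 * m) + γ ^ (m + 2 * n) + γ ^ n) / (3 * γ ^ (m + n))
      + (γ ^ (2 * n) + γ ^ n + 1) / (3 * γ ^ n) = γ ^ n := by
  have hm : γ ^ m ≠ 0 := pow_ne_zero m hγ
  have hn : γ ^ n ≠ 0 := pow_ne_zero n hγ
  simp only [pow_add, pow_mul']
  field_simp
  linear_combination (γ ^ n + 1) * hω

theorem stmt6_general (q m : ℕ) (F : Type*) [Field F] [Fintype F]
    (hq : Fintype.card F = q) (hq3 : q % 3 = 1)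
    (hm : m = (q - 1) / 3)
    (γ : Fˣ) (hγ : ∀ x : Fˣ, x ∈ Subgroup.zpowers γ)
    (k : ℕ)
    (a b c : F)
    (ha : a = ((γ : F)^(2*m+3*k+2) + (γ : F)^(m+6*k+4) + 1) / (3 * (γ : F)^(m+3*k+2)))
    (hb : b = ((γ : F)^(2*m) + (γ : F)^(m+6*k+4) + (γ : F)^(3*k+2)) / (3 * (γ : F)^(m+3*k+2)))
    (hc : c = ((γ : F)^(6*k+4) + (γ : F)^(3*k+2) + 1) / (3 * (γ : F)^(3*k+2)))
    (g : F → F)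
    (hg : ∀ x : F, g x = a * x^(2*m+1) + b * x^(m+1) + c * x) :
    ∀ i : ℕ, i ≤ m - 1 → g ((γ : F)^(3*i)) = (γ : F)^(3*(i+k)+2) := by
  intro i _
  have hω : IsPrimitiveRoot ((γ : F) ^ m) 3 :=
    isPrimitiveRoot_pow_of_card_eq_mul_add_one hγ (by rw [Nat.card_eq_fintype_card]; omega)
  have h3 : (3 : F) ≠ 0 := by
    simpa using (hω.neZero' (n := 3)).out
  have hy : ((γ : F) ^ (3 * i)) ^ m = 1 := by
    calc ((γ : F) ^ (3 * i)) ^ m = (((γ : F) ^ m) ^ 3) ^ i := by ring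
      _ = 1 := by rw [hω.pow_eq_one, one_pow]
  have hsum : a + b + c = (γ : F) ^ (3 * k + 2) := by
    rw [ha, hb, hc, show 2 * m + 3 * k + 2 = 2 * m + (3 * k + 2) by ring,
      show m + 6 * k + 4 = m + 2 * (3 * k + 2) by ring,
      show m + 3 * k + 2 = m + (3 * k + 2) by ring, show 6 * k + 4 = 2 * (3 * k + 2) by ring]
    exact coeff_sum_eq_pow γ.ne_zero h3 hω.sq_add_self_add_one _
  rw [hg, add_mul_pow_add_mul_pow_eq_of_pow_eq_one hy, hsum, ← pow_add]
  ring_nf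

theorem stmt6 (q m : ℕ) (F : Type*) [Field F] [Fintype F]
    (hq : Fintype.card F = q) (hodd : Odd q) (hq3 : q % 3 = 1)
    (hm : m = (q - 1) / 3)
    (γ : Fˣ) (hγ : ∀ x : Fˣ, x ∈ Subgroup.zpowers γ)
    (k : ℕ) (hk : k ≤ m - 1)
    (a b c : F)
    (ha : a = ((γ : F)^(2*m+3*k+2) + (γ : F)^(m+6*k+4) + 1) / (3 * (γ : F)^(m+3*k+2)))
    (hb : b = ((γ : F)^(2*m) + (γ : F)^(m+6*k+4) + (γ : F)^(3*k+2)) / (3 * (γ : F)^(m+3*k+2)))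
    (hc : c = ((γ : F)^(6*k+4) + (γ : F)^(3*k+2) + 1) / (3 * (γ : F)^(3*k+2)))
    (g : F → F)
    (hg : ∀ x : F, g x = a * x^(2*m+1) + b * x^(m+1) + c * x) :
    ∀ i : ℕ, i ≤ m - 1 → g ((γ : F)^(3*i)) = (γ : F)^(3*(i+k)+2) :=
  stmt6_general q m F hq hq3 hm γ hγ k a b c ha hb hc g hg
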